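/- Let M be an m×m complex matrix with M² = M (an idempotent), let d > 0 be a real number, and let 0 < r < d. Then the counterclockwise contour integral over the circle ∂B(d,r) of center d and radius r satisfies (i/(2π)) ∮_{∂B(d,r)} [(2M − I)·d − λ·I]⁻¹ dλ = M, where I is the m×m identity matrix and the integrand is the matrix inverse of (2M − I)·d − λ·I for λ on the contour. -/

import Mathlib

attribute [local instance] Matrix.normedAddCommGroup Matrix.normedSpace

open Metric Set Real

/-! The integrand is `(A - z)⁻¹` with `A = d • M - d • (1 - M)`, which decomposes along the
idempotent `M` as `(d - z)⁻¹ • M + (-d - z)⁻¹ • (1 - M)`. On the circle only the pole `d`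
lies inside, so only the `M` component survives and contributes `-2πi • M`. -/

lemma Matrix.inv_smul_add_smul_one_sub {n K : Type*} [Fintype n] [DecidableEq n] [Field K]
    {P : Matrix n n K} (hP : IsIdempotentElem P) {a b : K} (ha : a ≠ 0) (hb : b ≠ 0) :
    (a • P + b • (1 - P))⁻¹ = a⁻¹ • P + b⁻¹ • (1 - P) := by
  refine Matrix.inv_eq_right_inv ?_
  simp only [add_mul, mul_add, Matrix.smul_mul, Matrix.mul_smul, hP.eq, hP.one_sub.eq,
    hP.mul_one_sub_self, hP.one_sub_mul_self, smul_zero, add_zero, zero_add, smul_smul,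
    inv_mul_cancel₀ ha, inv_mul_cancel₀ hb, one_smul, add_sub_cancel]

theorem circleIntegral.integral_sub_inv_of_notMem_closedBall {c w : ℂ} {R : ℝ} (hR : 0 ≤ R)
    (hw : w ∉ closedBall c R) : (∮ z in C(c, R), (z - w)⁻¹) = 0 := by
  have hne : ∀ z ∈ closedBall c R, z - w ≠ 0 := fun z hz h ↦ hw (sub_eq_zero.mp h ▸ hz)
  have hdiff : DifferentiableOn ℂ (fun z ↦ (z - w)⁻¹) (closedBall c R) :=
    (differentiableOn_id.sub_const w).inv hne
  exact (hdiff.mono closure_ball_subset_closedBall).diffContOnCl.circleIntegral_eq_zero hR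

theorem circleIntegral_inv_sub_smul_add_sub_smul_one_sub {n : Type*} [Fintype n] [DecidableEq n]
    {P : Matrix n n ℂ} (hP : IsIdempotentElem P) {c a b : ℂ} {R : ℝ} (ha : a ∈ ball c R)
    (hb : b ∉ closedBall c R) :
    (∮ z in C(c, R), ((a - z) • P + (b - z) • (1 - P))⁻¹) = -(2 * π * Complex.I) • P := by
  have hR : 0 ≤ R := dist_nonneg.trans (mem_ball.mp ha).le
  have ha' : a ∉ sphere c R := fun h ↦ (mem_sphere.mp h).not_lt (mem_ball.mp ha)
  have hb' : b ∉ sphere c R := fun h ↦ hb (sphere_subset_closedBall h)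
  have hsplit : EqOn (fun z ↦ ((a - z) • P + (b - z) • (1 - P))⁻¹)
      (fun z ↦ (z - a)⁻¹ • -P + (z - b)⁻¹ • -(1 - P)) (sphere c R) := by
    intro z hz
    dsimp only
    have hza : a - z ≠ 0 := sub_ne_zero.mpr fun h ↦ ha' (h ▸ hz)
    have hzb : b - z ≠ 0 := sub_ne_zero.mpr fun h ↦ hb' (h ▸ hz)
    rw [Matrix.inv_smul_add_smul_one_sub hP hza hzb, ← neg_sub z a, ← neg_sub z b, inv_neg,
      inv_neg, neg_smul, neg_smul, smul_neg, smul_neg]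
  have hint : ∀ w ∉ sphere c R, ∀ X : Matrix n n ℂ,
      CircleIntegrable (fun z ↦ (z - w)⁻¹ • X) c R := fun w hw X ↦
    ContinuousOn.circleIntegrable hR <| ((continuous_id.sub continuous_const).continuousOn.inv₀
      fun z hz ↦ sub_ne_zero.mpr fun h : z = w ↦ hw (h ▸ hz)).smul continuousOn_const
  rw [circleIntegral.integral_congr hR hsplit,
    circleIntegral.integral_add (hint a ha' _) (hint b hb' _),
    circleIntegral.integral_smul_const, circleIntegral.integral_smul_const,
    circleIntegral.integral_sub_inv_of_mem_ball ha,
    circleIntegral.integral_sub_inv_of_notMem_closedBall hR hb, zero_smul, add_zero, smul_neg,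
    neg_smul]

theorem residue_integral_of_idempotent_general (m : ℕ) (M : Matrix (Fin m) (Fin m) ℂ)
    (hM : M * M = M) (d r : ℝ) (hr : 0 < r) (hrd : r < d) :
    (Complex.I / (2 * (Real.pi : ℂ))) •
      (∮ z in C((d : ℂ), r),
        ((d : ℂ) • (2 • M - 1) - z • (1 : Matrix (Fin m) (Fin m) ℂ))⁻¹) = M := by
  have hsplit : ∀ z : ℂ, (d : ℂ) • (2 • M - 1) - z • (1 : Matrix (Fin m) (Fin m) ℂ)
      = ((d : ℂ) - z) • M + (-(d : ℂ) - z) • (1 - M) := fun z ↦ by module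
  have hout : (-d : ℂ) ∉ closedBall (d : ℂ) r := by
    rw [mem_closedBall, Complex.dist_eq, ← Complex.ofReal_neg, ← Complex.ofReal_sub,
      Complex.norm_real, not_le, Real.norm_eq_abs, abs_of_neg (by linarith)]
    linarith
  simp only [hsplit, circleIntegral_inv_sub_smul_add_sub_smul_one_sub hM (mem_ball_self hr) hout,
    smul_smul]
  have hπ : (π : ℂ) ≠ 0 := Complex.ofReal_ne_zero.mpr Real.pi_ne_zero
  rw [show Complex.I / (2 * π) * -(2 * π * Complex.I) = 1 by field_simp; simp, one_smul]

/-- For an idempotent complex matrix `M` and `0 < r < d`, the counterclockwise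
contour integral of `λ ↦ ((2M - I)·d - λ·I)⁻¹` over the circle of center `d`
and radius `r`, multiplied by `i/(2π)`, equals `M`. -/
theorem residue_integral_of_idempotent (m : ℕ) (M : Matrix (Fin m) (Fin m) ℂ)
    (hM : M * M = M) (d r : ℝ) (hd : 0 < d) (hr : 0 < r) (hrd : r < d) :
    (Complex.I / (2 * (Real.pi : ℂ))) •
      (∮ z in C((d : ℂ), r),
        ((d : ℂ) • (2 • M - 1) - z • (1 : Matrix (Fin m) (Fin m) ℂ))⁻¹) = M :=
  residue_integral_of_idempotent_general m M hM d r hr hrd
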